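/- Let b ∈ (−1, 0) and define f : ℝ² → ℝ by f(η) = (1/2)(|η| + b η₂)², whose gradient for η ≠ 0 is ∇f(η) = (|η| + b η₂)(η/|η| + b e₂). Let u(x₁, x₂) = x₂ / (x₁² + x₂²) on ℝ²₊ = {(x₁,x₂) : x₂ > 0}. Then the vector field x ↦ ∇f(∇u(x)) has strictly positive divergence at every point of ℝ²₊: for all x with x₂ > 0, ∑_{i=1}^2 ∂/∂x_i [ (∇f)_i(∇u(x)) ] > 0. (Hence u is a strict subsolution of the equation ∇·(∇f(∇u)) = 0 in ℝ²₊.) -/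

import Mathlib

open Real MeasureTheory

noncomputable section

/-- The divergence of a vector field on `ℝ²`, i.e. the trace of its Jacobian. -/
def vdiv (V : EuclideanSpace ℝ (Fin 2) → EuclideanSpace ℝ (Fin 2))
    (x : EuclideanSpace ℝ (Fin 2)) : ℝ :=
  LinearMap.trace ℝ (EuclideanSpace ℝ (Fin 2)) (fderiv ℝ V x).toLinearMap

/-!
Away from the origin, `∇u = (-2x₁x₂, x₁² - x₂²)/|x|⁴` has length `|x|⁻²`, so `∇f(∇u)` is the
rational field `((|x|² + b(x₁² - x₂²))/|x|⁶) • (-2x₁x₂, x₁² - x₂² + b|x|²)`. A direct computation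
gives its divergence `-2b x₂ ((3 + 3b)x₁² + (1 - b)x₂²)/|x|⁶`, which is positive when
`-1 < b < 0` and `x₂ > 0`.
-/

local notation "E²" => EuclideanSpace ℝ (Fin 2)

theorem LinearMap.trace_euclideanSpace {𝕜 ι : Type*} [RCLike 𝕜] [Fintype ι] [DecidableEq ι]
    (A : EuclideanSpace 𝕜 ι →ₗ[𝕜] EuclideanSpace 𝕜 ι) :
    LinearMap.trace 𝕜 _ A = ∑ i, A (EuclideanSpace.single i 1) i := by
  simp [LinearMap.trace_eq_matrix_trace 𝕜 (PiLp.basisFun 2 𝕜 ι), Matrix.trace,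
    LinearMap.toMatrix_apply]

theorem vdiv_eq_of_hasFDerivAt {V : E² → E²} {V' : E² →L[ℝ] E²} {x : E²}
    (hV : HasFDerivAt V V' x) :
    vdiv V x = V' (EuclideanSpace.single 0 1) 0 + V' (EuclideanSpace.single 1 1) 1 := by
  simp [vdiv, hV.fderiv, LinearMap.trace_euclideanSpace, Fin.sum_univ_two]

theorem Filter.EventuallyEq.vdiv_eq {V W : E² → E²} {x : E²} (h : V =ᶠ[nhds x] W) :
    vdiv V x = vdiv W x := by
  simp only [vdiv, h.fderiv_eq]

def gradU (y : E²) : E² :=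
  ((y 0 ^ 2 + y 1 ^ 2) ^ 2)⁻¹ • !₂[-2 * y 0 * y 1, y 0 ^ 2 - y 1 ^ 2]

theorem hasGradientAt_gradU {y : E²} (hy : y 0 ^ 2 + y 1 ^ 2 ≠ 0) :
    HasGradientAt (fun x : E² => x 1 / (x 0 ^ 2 + x 1 ^ 2)) (gradU y) y := by
  have h0 := (EuclideanSpace.proj 0 : E² →L[ℝ] ℝ).hasFDerivAt (x := y)
  have h1 := (EuclideanSpace.proj 1 : E² →L[ℝ] ℝ).hasFDerivAt (x := y)
  have h : HasFDerivAt (fun x : E² => x 1 * (x 0 ^ 2 + x 1 ^ 2)⁻¹) _ y :=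
    h1.mul ((hasDerivAt_inv hy).comp_hasFDerivAt y ((h0.pow 2).add (h1.pow 2)))
  simp only [div_eq_mul_inv, hasGradientAt_iff_hasFDerivAt]
  refine h.congr_fderiv ?_
  ext v
  simp [gradU, PiLp.inner_apply, Fin.sum_univ_two]
  field_simp
  ring

theorem norm_gradU (y : E²) : ‖gradU y‖ = (y 0 ^ 2 + y 1 ^ 2)⁻¹ := by
  have hsq : (-2 * y 0 * y 1) ^ 2 + (y 0 ^ 2 - y 1 ^ 2) ^ 2 = (y 0 ^ 2 + y 1 ^ 2) ^ 2 := by ring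
  have hr : 0 ≤ y 0 ^ 2 + y 1 ^ 2 := by positivity
  rw [gradU, norm_smul, EuclideanSpace.norm_eq, Fin.sum_univ_two]
  simp only [Matrix.cons_val_zero, Matrix.cons_val_one, Real.norm_eq_abs, sq_abs, hsq,
    Real.sqrt_sq hr]
  rw [abs_of_nonneg (by positivity), sq (y 0 ^ 2 + y 1 ^ 2), mul_inv]
  simpa only [inv_inv] using mul_self_mul_inv (y 0 ^ 2 + y 1 ^ 2)⁻¹

def gradF (b : ℝ) (η : E²) : E² :=
  (‖η‖ + b * η 1) • (‖η‖⁻¹ • η + b • EuclideanSpace.single 1 1)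

def gradFGradU (b : ℝ) (y : E²) : E² :=
  ((y 0 ^ 2 + y 1 ^ 2 + b * (y 0 ^ 2 - y 1 ^ 2)) / (y 0 ^ 2 + y 1 ^ 2) ^ 3) •
    ((-2 * y 0 * y 1) • EuclideanSpace.single 0 1 +
      (y 0 ^ 2 - y 1 ^ 2 + b * (y 0 ^ 2 + y 1 ^ 2)) • EuclideanSpace.single 1 1)

theorem gradF_gradU (b : ℝ) {y : E²} (hy : y 0 ^ 2 + y 1 ^ 2 ≠ 0) :
    gradF b (gradU y) = gradFGradU b y := by
  rw [gradF, norm_gradU, inv_inv]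
  ext i
  fin_cases i <;> simp [gradU, gradFGradU] <;> field_simp

theorem vdiv_gradFGradU (b : ℝ) {x : E²} (hx : x 0 ^ 2 + x 1 ^ 2 ≠ 0) :
    vdiv (gradFGradU b) x =
      -2 * b * x 1 * ((3 + 3 * b) * x 0 ^ 2 + (1 - b) * x 1 ^ 2) / (x 0 ^ 2 + x 1 ^ 2) ^ 3 := by
  have h0 := (EuclideanSpace.proj 0 : E² →L[ℝ] ℝ).hasFDerivAt (x := x)
  have h1 := (EuclideanSpace.proj 1 : E² →L[ℝ] ℝ).hasFDerivAt (x := x)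
  have hr := (h0.pow 2).add (h1.pow 2)
  have hs := (h0.pow 2).sub (h1.pow 2)
  have hc := (hr.add (hs.const_mul b)).mul
    ((hasDerivAt_inv (pow_ne_zero 3 hx)).comp_hasFDerivAt x (hr.pow 3))
  have hW : HasFDerivAt (gradFGradU b) _ x :=
    hc.smul ((((h0.const_mul (-2)).mul h1).smul_const (EuclideanSpace.single 0 1)).add
      ((hs.add (hr.const_mul b)).smul_const (EuclideanSpace.single 1 1)))
  rw [vdiv_eq_of_hasFDerivAt hW]
  simp
  field_simp
  ring

theorem stmt19_general (b : ℝ) (hb1 : -1 < b) (hb2 : b < 0)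
    (f : EuclideanSpace ℝ (Fin 2) → ℝ)
    (hgradf : ∀ η : EuclideanSpace ℝ (Fin 2), η ≠ 0 →
      gradient f η = (‖η‖ + b * η 1) •
        (‖η‖⁻¹ • η + b • EuclideanSpace.single (1 : Fin 2) (1 : ℝ)))
    (u : EuclideanSpace ℝ (Fin 2) → ℝ)
    (hu : ∀ x : EuclideanSpace ℝ (Fin 2), u x = x 1 / (x 0 ^ 2 + x 1 ^ 2)) :
    ∀ x : EuclideanSpace ℝ (Fin 2), 0 < x 1 →
      0 < vdiv (fun y => gradient f (gradient u y)) x := by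
  have hr : ∀ y : E², 0 < y 1 → y 0 ^ 2 + y 1 ^ 2 ≠ 0 := fun y hy => by positivity
  intro x hx
  have hfield : (fun y => gradient f (gradient u y)) =ᶠ[nhds x] gradFGradU b := by
    filter_upwards [(isOpen_lt continuous_const (EuclideanSpace.proj 1).continuous).mem_nhds hx]
      with y hy
    have hgradU : gradU y ≠ 0 := norm_ne_zero_iff.1 (by simpa [norm_gradU] using hr y hy)
    rw [funext hu, (hasGradientAt_gradU (hr y hy)).gradient, hgradf _ hgradU]
    exact gradF_gradU b (hr y hy)
  rw [hfield.vdiv_eq, vdiv_gradFGradU b (hr x hx)]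
  have hquad : 0 < (3 + 3 * b) * x 0 ^ 2 + (1 - b) * x 1 ^ 2 := by nlinarith [sq_nonneg (x 0)]
  exact div_pos (mul_pos (mul_pos (by linarith) hx) hquad) (by positivity)

/-- for `b ∈ (-1,0)`, `f(η) = ½(|η| + b η₂)²` and
`u(x₁,x₂) = x₂/(x₁² + x₂²)`, the vector field `x ↦ ∇f(∇u(x))` has strictly positive
divergence at every point of the upper half-plane, i.e. `u` is a strict subsolution of
`∇·(∇f(∇u)) = 0` in `ℝ²₊`. -/
theorem stmt19 (b : ℝ) (hb1 : -1 < b) (hb2 : b < 0)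
    (f : EuclideanSpace ℝ (Fin 2) → ℝ)
    (hf : ∀ η : EuclideanSpace ℝ (Fin 2), f η = (1 / 2) * (‖η‖ + b * η 1) ^ 2)
    (hgradf : ∀ η : EuclideanSpace ℝ (Fin 2), η ≠ 0 →
      gradient f η = (‖η‖ + b * η 1) •
        (‖η‖⁻¹ • η + b • EuclideanSpace.single (1 : Fin 2) (1 : ℝ)))
    (u : EuclideanSpace ℝ (Fin 2) → ℝ)
    (hu : ∀ x : EuclideanSpace ℝ (Fin 2), u x = x 1 / (x 0 ^ 2 + x 1 ^ 2)) :
    ∀ x : EuclideanSpace ℝ (Fin 2), 0 < x 1 →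
      0 < vdiv (fun y => gradient f (gradient u y)) x :=
  stmt19_general b hb1 hb2 f hgradf u hu
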